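/- Greedy algorithm correctness for single-block placement: for each step i of the greedy algorithm (which starts with P_0 = ∅ and at each step adds to the current partial placement the leaf u minimizing f⃗(P ∪ {u}) lexicographically), there exists an optimal placement P* of size ρ (one lexico-minimizing f⃗ among all size-ρ subsets of leaves) such that P_i ⊆ P*. -/

import Mathlib

attribute [local instance] Classical.propDecidable

/-- `v` is a descendant of `u` in the rooted tree given by the `parent` map
(every vertex is a descendant of itself). -/
def isDesc {n : ℕ} (parent : Fin n → Fin n) (u v : Fin n) : Prop :=
  ∃ k : ℕ, parent^[k] v = u

/-- `v` is a leaf: no other vertex has `v` as its parent. -/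
def isLeaf {n : ℕ} (parent : Fin n → Fin n) (v : Fin n) : Prop :=
  ∀ w, parent w = v → w = v

/-- The set of leaves of the tree. -/
noncomputable def leaves {n : ℕ} (parent : Fin n → Fin n) : Finset (Fin n) :=
  Finset.univ.filter (isLeaf parent)

/-- The set `C_u` of leaf descendants of vertex `u`. -/
noncomputable def leafDesc {n : ℕ} (parent : Fin n → Fin n) (u : Fin n) : Finset (Fin n) :=
  Finset.univ.filter (fun v => isDesc parent u v ∧ isLeaf parent v)

/-- The failure number `f(u, P) = |P ∩ C_u|`. -/
noncomputable def fnum {n : ℕ} (parent : Fin n → Fin n) (u : Fin n) (P : Finset (Fin n)) : ℕ :=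
  (P ∩ leafDesc parent u).card

/-- `c` is a child of `u`. -/
def isChild {n : ℕ} (parent : Fin n → Fin n) (c u : Fin n) : Prop :=
  parent c = u ∧ c ≠ u

/-- The failure aggregate `f⃗(P) ∈ ℕ^{ρ+1}`: entry `i` counts the vertices with
failure number `ρ - i`. -/
noncomputable def fagg {n : ℕ} (parent : Fin n → Fin n) (ρ : ℕ) (P : Finset (Fin n)) :
    Fin (ρ + 1) → ℕ :=
  fun i => (Finset.univ.filter (fun v : Fin n => fnum parent v P = ρ - (i : ℕ))).card

/-- Lexicographic order on `ℕ`-vectors. -/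
def lexLe {d : ℕ} (x y : Fin d → ℕ) : Prop :=
  x = y ∨ ∃ j : Fin d, x j < y j ∧ ∀ i : Fin d, i < j → x i = y i

/-- Strict lexicographic order on `ℕ`-vectors. -/
def lexLt {d : ℕ} (x y : Fin d → ℕ) : Prop :=
  ∃ j : Fin d, x j < y j ∧ ∀ i : Fin d, i < j → x i = y i


/-!
Exchange argument. The failure aggregate is the sum over vertices `x` of the unit vectors
`e(f(x, P)) = lexUnit ρ (f(x, P))` in the ordered cancellative monoid `Lex (Fin (ρ + 1) → ℕ)`.
Let `P ⊆ S` with `S` optimal and let `u ∉ S` be the greedy leaf. Pick `v ∈ S \ P` closest to `u`,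
so that an ancestor of `u` but not of `v` sees no leaf of `S \ P`. Vertex by vertex, the failure
numbers under `S - v + u` and `P + v` are dominated by those under `S` and `P + u`: on ancestors of
`u` only both pairs are `{p, p + 1}`, and on ancestors of `v` only one compares
`e(s - 1) + e(p + 1)` with `e(s) + e(p)` for `p < s`. Summing,
`f⃗(S - v + u) + f⃗(P + v) ≤ f⃗(S) + f⃗(P + u) ≤ f⃗(S) + f⃗(P + v)`,
and cancelling leaves `S - v + u` optimal.
-/

lemma lexLe_iff_toLex_le {d : ℕ} {x y : Fin d → ℕ} : lexLe x y ↔ toLex x ≤ toLex y := by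
  rw [le_iff_lt_or_eq, lexLe, or_comm, toLex_inj]
  exact or_congr (exists_congr fun j => and_comm) Iff.rfl

def lexUnit (ρ c : ℕ) : Lex (Fin (ρ + 1) → ℕ) :=
  toLex fun i => if c + i = ρ then 1 else 0

lemma lexUnit_add_lexUnit_succ_le {ρ c d : ℕ} (hcd : c ≤ d) (hd : d + 1 ≤ ρ) :
    lexUnit ρ d + lexUnit ρ (c + 1) ≤ lexUnit ρ (d + 1) + lexUnit ρ c := by
  obtain rfl | hlt := hcd.eq_or_lt
  · exact le_of_eq (add_comm _ _)
  refine le_of_lt ⟨⟨ρ - d - 1, by omega⟩, fun j hj => ?_, ?_⟩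
  · have hj' : (j : ℕ) < ρ - d - 1 := hj
    simp only [lexUnit, ← toLex_add, Pi.toLex_apply, Pi.add_apply]
    split_ifs <;> omega
  · simp only [lexUnit, ← toLex_add, Pi.toLex_apply, Pi.add_apply]
    split_ifs <;> omega

lemma lexUnit_exchange {ρ p q s : ℕ} {a b : Prop} [Decidable a] [Decidable b] (hs : s ≤ ρ)
    (hq : q + (if b then 1 else 0) = s + (if a then 1 else 0))
    (ha : a → ¬ b → s = p) (hb : b → p + 1 ≤ s) :
    lexUnit ρ q + lexUnit ρ (p + if b then 1 else 0)
      ≤ lexUnit ρ s + lexUnit ρ (p + if a then 1 else 0) := by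
  by_cases hb' : b <;> by_cases ha' : a <;>
    simp only [hb', ha', if_true, if_false, add_zero] at hq ⊢
  · obtain rfl : q = s := by omega
    exact le_rfl
  · obtain rfl : s = q + 1 := hq.symm
    exact lexUnit_add_lexUnit_succ_le (c := p) (by have := hb hb'; omega) hs
  · rw [hq, ha ha' hb']
    exact (add_comm _ _).le
  · rw [hq]

section Aggregate
variable {ι α : Type*} [Fintype ι] [DecidableEq α]

def aggregate (ρ : ℕ) (D : ι → Finset α) (R : Finset α) : Lex (Fin (ρ + 1) → ℕ) :=
  ∑ x, lexUnit ρ (R ∩ D x).card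

lemma card_insert_inter_of_notMem {w : α} {R D : Finset α} (hw : w ∉ R) :
    (insert w R ∩ D).card = (R ∩ D).card + if w ∈ D then 1 else 0 := by
  split_ifs with hwD
  · rw [Finset.insert_inter_of_mem hwD,
      Finset.card_insert_of_notMem fun h => hw (Finset.mem_inter.1 h).1]
  · rw [Finset.insert_inter_of_notMem hwD, add_zero]

theorem aggregate_exchange_le {ρ : ℕ} {D : ι → Finset α} {P S : Finset α} {u v : α}
    (hPS : P ⊆ S) (hS : S.card ≤ ρ) (hu : u ∉ S) (hv : v ∈ S) (hvP : v ∉ P)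
    (hclose : ∀ x, u ∈ D x → v ∉ D x → S ∩ D x ⊆ P)
    (hgreedy : aggregate ρ D (insert u P) ≤ aggregate ρ D (insert v P)) :
    aggregate ρ D (insert u (S.erase v)) ≤ aggregate ρ D S := by
  have hvertex : ∀ x,
      lexUnit ρ (insert u (S.erase v) ∩ D x).card + lexUnit ρ (insert v P ∩ D x).card
      ≤ lexUnit ρ (S ∩ D x).card + lexUnit ρ (insert u P ∩ D x).card := by
    intro x
    rw [card_insert_inter_of_notMem (fun h => hu (hPS h)), card_insert_inter_of_notMem hvP]
    apply lexUnit_exchange ((Finset.card_le_card Finset.inter_subset_left).trans hS)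
    · rw [card_insert_inter_of_notMem (fun h => hu (Finset.mem_of_mem_erase h)), add_right_comm,
        ← card_insert_inter_of_notMem (Finset.notMem_erase v S), Finset.insert_erase hv]
    · exact fun hux hvx => le_antisymm (Finset.card_le_card
        (Finset.subset_inter (hclose x hux hvx) Finset.inter_subset_right))
        (Finset.card_le_card (Finset.inter_subset_inter_right hPS))
    · refine fun hvx => Finset.card_lt_card ?_
      exact (Finset.ssubset_iff_of_subset (Finset.inter_subset_inter_right hPS)).2
        ⟨v, Finset.mem_inter.2 ⟨hv, hvx⟩, fun h => hvP (Finset.mem_inter.1 h).1⟩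
  have hsum : aggregate ρ D (insert u (S.erase v)) + aggregate ρ D (insert v P)
      ≤ aggregate ρ D S + aggregate ρ D (insert u P) := by
    simpa only [aggregate, ← Finset.sum_add_distrib] using
      Finset.sum_le_sum fun x (_ : x ∈ Finset.univ) => hvertex x
  exact le_of_add_le_add_right (hsum.trans (add_le_add le_rfl hgreedy))

end Aggregate

lemma toLex_fagg {n : ℕ} (parent : Fin n → Fin n) (ρ : ℕ) (R : Finset (Fin n)) :
    toLex (fagg parent ρ R) = aggregate ρ (leafDesc parent) R := by
  change fagg parent ρ R = ∑ x, ofLex (lexUnit ρ (R ∩ leafDesc parent x).card)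
  funext i
  rw [Finset.sum_apply, fagg, Finset.card_filter]
  simp only [lexUnit, ofLex_toLex]
  refine Finset.sum_congr rfl fun x _ => if_congr ?_ rfl rfl
  have := i.isLt
  unfold fnum
  omega

lemma lexLe_fagg_iff {n ρ : ℕ} {parent : Fin n → Fin n} {R R' : Finset (Fin n)} :
    lexLe (fagg parent ρ R) (fagg parent ρ R') ↔
      aggregate ρ (leafDesc parent) R ≤ aggregate ρ (leafDesc parent) R' := by
  rw [lexLe_iff_toLex_le, toLex_fagg, toLex_fagg]

section Tree
variable {n : ℕ} {parent : Fin n → Fin n}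

lemma isDesc_trans {x y z : Fin n} (hxy : isDesc parent x y) (hyz : isDesc parent y z) :
    isDesc parent x z := by
  obtain ⟨k, hk⟩ := hxy
  obtain ⟨l, hl⟩ := hyz
  exact ⟨k + l, by rw [Function.iterate_add_apply, hl, hk]⟩

lemma mem_leafDesc {x v : Fin n} :
    v ∈ leafDesc parent x ↔ isDesc parent x v ∧ isLeaf parent v := by
  simp [leafDesc]

/-- Take `v` below the lowest ancestor of `u` that has an element of `S` below it. -/
lemma exists_closest_mem {r : Fin n} (hreach : ∀ v, isDesc parent r v)
    (u : Fin n) {S : Finset (Fin n)} (hS : S.Nonempty) :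
    ∃ v ∈ S, ∀ x, isDesc parent x u → (∃ w ∈ S, isDesc parent x w) → isDesc parent x v := by
  classical
  have hex : ∃ k, ∃ w ∈ S, isDesc parent (parent^[k] u) w := by
    obtain ⟨k, hk⟩ := hreach u
    obtain ⟨w, hw⟩ := hS
    exact ⟨k, w, hw, hk ▸ hreach w⟩
  obtain ⟨v, hvS, hv⟩ := Nat.find_spec hex
  refine ⟨v, hvS, fun x ⟨m, hm⟩ ⟨w, hwS, hw⟩ => isDesc_trans ?_ hv⟩
  have hle : Nat.find hex ≤ m := Nat.find_min' hex ⟨w, hwS, hm ▸ hw⟩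
  exact ⟨m - Nat.find hex, by rw [← Function.iterate_add_apply, Nat.sub_add_cancel hle, hm]⟩

end Tree

def IsOptimalPlacement {n : ℕ} (parent : Fin n → Fin n) (ρ : ℕ) (P : Finset (Fin n)) : Prop :=
  P ⊆ leaves parent ∧ P.card = ρ ∧
    ∀ Q ⊆ leaves parent, Q.card = ρ → lexLe (fagg parent ρ P) (fagg parent ρ Q)

namespace IsOptimalPlacement
variable {n ρ : ℕ} {parent : Fin n → Fin n}

lemma exists_of_le_card (hcap : ρ ≤ (leaves parent).card) :
    ∃ P, IsOptimalPlacement parent ρ P := by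
  obtain ⟨P, hP, hmin⟩ := Finset.exists_min_image ((leaves parent).powersetCard ρ)
    (aggregate ρ (leafDesc parent)) (Finset.powersetCard_nonempty.2 hcap)
  rw [Finset.mem_powersetCard] at hP
  exact ⟨P, hP.1, hP.2, fun Q hQ hQc =>
    lexLe_fagg_iff.2 (hmin Q (Finset.mem_powersetCard.2 ⟨hQ, hQc⟩))⟩

lemma exists_insert_subset {r : Fin n} (hreach : ∀ v, isDesc parent r v)
    {P S : Finset (Fin n)} {u : Fin n} (hS : IsOptimalPlacement parent ρ S) (hPS : P ⊆ S)
    (hP : P.card < ρ) (hu : u ∈ leaves parent \ P)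
    (hgreedy : ∀ w ∈ leaves parent \ P,
      lexLe (fagg parent ρ (insert u P)) (fagg parent ρ (insert w P))) :
    ∃ S', IsOptimalPlacement parent ρ S' ∧ insert u P ⊆ S' := by
  obtain ⟨hSleaves, hScard, hSopt⟩ := hS
  obtain ⟨huL, huP⟩ := Finset.mem_sdiff.1 hu
  by_cases huS : u ∈ S
  · exact ⟨S, ⟨hSleaves, hScard, hSopt⟩, Finset.insert_subset huS hPS⟩
  have hdiff : (S \ P).Nonempty :=
    Finset.sdiff_nonempty.2 fun h => (Finset.card_le_card h).not_gt (hScard ▸ hP)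
  obtain ⟨v, hv, hclosest⟩ := exists_closest_mem hreach u hdiff
  obtain ⟨hvS, hvP⟩ := Finset.mem_sdiff.1 hv
  have hvL : isLeaf parent v := (Finset.mem_filter.1 (hSleaves hvS)).2
  have hle : aggregate ρ (leafDesc parent) (insert u (S.erase v))
      ≤ aggregate ρ (leafDesc parent) S := by
    refine aggregate_exchange_le hPS hScard.le huS hvS hvP (fun x hux hvx w hw => ?_)
      (lexLe_fagg_iff.1 (hgreedy v (Finset.mem_sdiff.2 ⟨hSleaves hvS, hvP⟩)))
    obtain ⟨hwS, hwx⟩ := Finset.mem_inter.1 hw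
    by_contra hwP
    exact hvx (mem_leafDesc.2 ⟨hclosest x (mem_leafDesc.1 hux).1
      ⟨w, Finset.mem_sdiff.2 ⟨hwS, hwP⟩, (mem_leafDesc.1 hwx).1⟩, hvL⟩)
  refine ⟨insert u (S.erase v), ⟨?_, ?_, fun Q hQ hQc => ?_⟩, ?_⟩
  · exact Finset.insert_subset huL ((Finset.erase_subset v S).trans hSleaves)
  · rw [Finset.card_insert_of_notMem fun h => huS (Finset.mem_of_mem_erase h),
      Finset.card_erase_of_mem hvS, hScard]
    omega
  · exact lexLe_fagg_iff.2 (hle.trans (lexLe_fagg_iff.1 (hSopt Q hQ hQc)))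
  · exact Finset.insert_subset_insert u fun w hw =>
      Finset.mem_erase.2 ⟨ne_of_mem_of_not_mem hw hvP, hPS hw⟩

end IsOptimalPlacement

theorem greedy_correct_general {n ρ : ℕ} (parent : Fin n → Fin n)
    (r : Fin n) (hreach : ∀ v, isDesc parent r v)
    (hcap : ρ ≤ (leaves parent).card)
    (Pseq : ℕ → Finset (Fin n)) (h0 : Pseq 0 = ∅)
    (hstep : ∀ i, i < ρ → ∃ u ∈ leaves parent \ Pseq i,
      Pseq (i + 1) = insert u (Pseq i) ∧
      ∀ w ∈ leaves parent \ Pseq i,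
        lexLe (fagg parent ρ (insert u (Pseq i))) (fagg parent ρ (insert w (Pseq i)))) :
    ∀ i, i ≤ ρ → ∃ Popt : Finset (Fin n),
      Popt ⊆ leaves parent ∧ Popt.card = ρ ∧
      (∀ Q : Finset (Fin n), Q ⊆ leaves parent → Q.card = ρ →
        lexLe (fagg parent ρ Popt) (fagg parent ρ Q)) ∧
      Pseq i ⊆ Popt := by
  have hcard : ∀ i ≤ ρ, (Pseq i).card = i := by
    intro i
    induction i with
    | zero => simp [h0]
    | succ i ih =>
      intro hi
      obtain ⟨u, hu, hPu, -⟩ := hstep i (by omega)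
      rw [hPu, Finset.card_insert_of_notMem (Finset.mem_sdiff.1 hu).2, ih (by omega)]
  suffices ∀ i ≤ ρ, ∃ Popt, IsOptimalPlacement parent ρ Popt ∧ Pseq i ⊆ Popt by
    intro i hi
    obtain ⟨Popt, ⟨hleaves, hcardP, hopt⟩, hsub⟩ := this i hi
    exact ⟨Popt, hleaves, hcardP, hopt, hsub⟩
  intro i
  induction i with
  | zero =>
    obtain ⟨P, hP⟩ := IsOptimalPlacement.exists_of_le_card hcap
    exact fun _ => ⟨P, hP, h0 ▸ Finset.empty_subset P⟩
  | succ i ih =>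
    intro hi
    obtain ⟨S, hS, hPS⟩ := ih (by omega)
    obtain ⟨u, hu, hPu, hgreedy⟩ := hstep i (by omega)
    rw [hPu]
    exact hS.exists_insert_subset hreach hPS (by rw [hcard i (by omega)]; omega) hu hgreedy

/-- Greedy algorithm correctness: every partial placement produced by the greedy
algorithm (which at each step adds the leaf lexico-minimizing the resulting
failure aggregate) is contained in some optimal placement of size `ρ`. -/
theorem greedy_correct {n ρ : ℕ} (parent : Fin n → Fin n)
    (r : Fin n) (hroot : parent r = r) (hreach : ∀ v, isDesc parent r v)
    (hcap : ρ ≤ (leaves parent).card)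
    (Pseq : ℕ → Finset (Fin n)) (h0 : Pseq 0 = ∅)
    (hstep : ∀ i, i < ρ → ∃ u ∈ leaves parent \ Pseq i,
      Pseq (i + 1) = insert u (Pseq i) ∧
      ∀ w ∈ leaves parent \ Pseq i,
        lexLe (fagg parent ρ (insert u (Pseq i))) (fagg parent ρ (insert w (Pseq i)))) :
    ∀ i, i ≤ ρ → ∃ Popt : Finset (Fin n),
      Popt ⊆ leaves parent ∧ Popt.card = ρ ∧
      (∀ Q : Finset (Fin n), Q ⊆ leaves parent → Q.card = ρ →
        lexLe (fagg parent ρ Popt) (fagg parent ρ Q)) ∧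
      Pseq i ⊆ Popt :=
  greedy_correct_general parent r hreach hcap Pseq h0 hstep
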